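/- Let 1 ≤ p ≤ q with p + q ≥ 3, and let φ : ℂ[x₁,…,x_p, y₁,…,y_q] → ℂ[x₁,…,x_{p−1}, y₁,…,y_{q−1}] be the ring homomorphism with φ(x_p) = 0, φ(y_q) = 0 and all other variables mapped to the correspondingly named variables. Then for every polynomial f invariant under all permutations of the x-variables and all permutations of the y-variables, φ(f) lies in J_{p−1,q−1} if and only if there exist polynomials h₁, h₂ (invariant under the same permutation groups) with f − e_p(x)·h₁ − e_q(y)·h₂ ∈ J_{p,q}. In other words, the kernel of the induced map between the two quotient rings is the ideal generated by σ_p and τ_q. -/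

import Mathlib

open MvPolynomial

/-- `e_r(x)`, the `r`-th elementary symmetric polynomial in the `x`-variables
`x₁,…,x_p` of `ℂ[x₁,…,x_p, y₁,…,y_q]` (zero for `r > p`, and `e₀ = 1`). -/
noncomputable def ex (p q r : ℕ) : MvPolynomial (Fin p ⊕ Fin q) ℂ :=
  rename Sum.inl (esymm (Fin p) ℂ r)

/-- `e_s(y)`, the `s`-th elementary symmetric polynomial in the `y`-variables
`y₁,…,y_q` of `ℂ[x₁,…,x_p, y₁,…,y_q]` (zero for `s > q`, and `e₀ = 1`). -/
noncomputable def ey (p q s : ℕ) : MvPolynomial (Fin p ⊕ Fin q) ℂ :=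
  rename Sum.inr (esymm (Fin q) ℂ s)

/-- `c_k = Σ_{r+s=k} e_r(x) e_s(y)`, the degree-`k` homogeneous component of
`∏ᵢ(1+xᵢ) · ∏ⱼ(1+yⱼ) - 1`. -/
noncomputable def ck (p q k : ℕ) : MvPolynomial (Fin p ⊕ Fin q) ℂ :=
  ∑ r ∈ Finset.range (k + 1), ex p q r * ey p q (k - r)

/-- The ideal `J_{p,q}` generated by the `c_k` for `1 ≤ k ≤ p + q`. -/
noncomputable def Jpq (p q : ℕ) : Ideal (MvPolynomial (Fin p ⊕ Fin q) ℂ) :=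
  Ideal.span {f | ∃ k : ℕ, 1 ≤ k ∧ k ≤ p + q ∧ f = ck p q k}

/-- `f` is invariant under all permutations of the `x`-variables among
themselves and all permutations of the `y`-variables among themselves. -/
def BiSymmetric (p q : ℕ) (f : MvPolynomial (Fin p ⊕ Fin q) ℂ) : Prop :=
  ∀ (sx : Equiv.Perm (Fin p)) (sy : Equiv.Perm (Fin q)),
    rename (Equiv.sumCongr sx sy) f = f

/-- The ring homomorphism
`ℂ[x₁,…,x_p, y₁,…,y_q] → ℂ[x₁,…,x_{p-1}, y₁,…,y_{q-1}]` (here `p = p' + 1`,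
`q = q' + 1`) sending `x_p ↦ 0`, `y_q ↦ 0` and every other variable to the
correspondingly named variable. -/
noncomputable def phi (p' q' : ℕ) :
    MvPolynomial (Fin (p' + 1) ⊕ Fin (q' + 1)) ℂ →ₐ[ℂ]
      MvPolynomial (Fin p' ⊕ Fin q') ℂ :=
  aeval (Sum.elim (Fin.lastCases 0 fun i => X (Sum.inl i))
    (Fin.lastCases 0 fun j => X (Sum.inr j)))

/- ### basic esymm lemmas -/

lemma esymm_fin_eq_zero {R : Type*} [CommSemiring R] {n r : ℕ} (h : n < r) :
    esymm (Fin n) R r = 0 := by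
  rw [esymm, Finset.powersetCard_eq_empty.2 (by simpa using h), Finset.sum_empty]

lemma ex_eq_zero {p q r : ℕ} (h : p < r) : ex p q r = 0 := by
  rw [ex, esymm_fin_eq_zero h, map_zero]

lemma ey_eq_zero {p q s : ℕ} (h : q < s) : ey p q s = 0 := by
  rw [ey, esymm_fin_eq_zero h, map_zero]

lemma ck_eq_zero {p q k : ℕ} (h : p + q < k) : ck p q k = 0 := by
  rw [ck]
  apply Finset.sum_eq_zero
  intro r hr
  rw [Finset.mem_range] at hr
  rcases le_or_gt r p with h1 | h1
  · rw [ey_eq_zero (by omega), mul_zero]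
  · rw [ex_eq_zero h1, zero_mul]

/- ### bisymmetry of generators -/

lemma biSymm_ex (p q r : ℕ) : BiSymmetric p q (ex p q r) := by
  intro sx sy
  rw [ex, rename_rename]
  have : (⇑(Equiv.sumCongr sx sy) ∘ Sum.inl : Fin p → Fin p ⊕ Fin q)
      = Sum.inl ∘ ⇑sx := by funext i; simp
  rw [this, ← rename_rename, rename_esymm]

lemma biSymm_ey (p q s : ℕ) : BiSymmetric p q (ey p q s) := by
  intro sx sy
  rw [ey, rename_rename]
  have : (⇑(Equiv.sumCongr sx sy) ∘ Sum.inr : Fin q → Fin p ⊕ Fin q)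
      = Sum.inr ∘ ⇑sy := by funext j; simp
  rw [this, ← rename_rename, rename_esymm]

lemma biSymm_ck (p q k : ℕ) : BiSymmetric p q (ck p q k) := by
  intro sx sy
  rw [ck, map_sum]
  exact Finset.sum_congr rfl fun r _ => by
    rw [map_mul, biSymm_ex p q r sx sy, biSymm_ey p q _ sx sy]

/- ### multiset esymm lemma -/

lemma multiset_esymm_zero_cons {R : Type*} [CommSemiring R] (m : Multiset R) (r : ℕ) :
    ((0 : R) ::ₘ m).esymm r = m.esymm r := by
  cases r with
  | zero => simp [Multiset.esymm]
  | succ r =>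
    rw [Multiset.esymm, Multiset.powersetCard_cons, Multiset.map_add, Multiset.sum_add,
      Multiset.map_map, Multiset.esymm]
    have : ((Multiset.powersetCard r m).map (Multiset.prod ∘ Multiset.cons 0)).sum = 0 := by
      rw [show (Multiset.prod ∘ Multiset.cons (0 : R)) = fun _ => (0 : R) by
        funext t; simp]
      simp
    rw [this, add_zero]

lemma multiset_map_lastCases {n : ℕ} {S : Type*} [CommSemiring S] (g : Fin n → S) :
    (Finset.univ.val : Multiset (Fin (n + 1))).map (Fin.lastCases 0 g)
      = (0 : S) ::ₘ (Finset.univ.val : Multiset (Fin n)).map g := by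
  rw [Fin.univ_castSuccEmb, Finset.cons_val, Multiset.map_cons, Fin.lastCases_last,
    Finset.map_val, Multiset.map_map]
  congr 1
  apply Multiset.map_congr rfl
  intro i _
  show Fin.lastCases 0 g (Fin.castSuccEmb i) = g i
  have h : Fin.castSuccEmb i = Fin.castSucc i := rfl
  rw [h, Fin.lastCases_castSucc]

/- ### phi on generators -/

lemma phi_ex (p' q' r : ℕ) : phi p' q' (ex (p' + 1) (q' + 1) r) = ex p' q' r := by
  rw [ex, phi, aeval_rename, ex]
  have h1 : (Sum.elim (Fin.lastCases 0 fun i => X (Sum.inl i))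
      (Fin.lastCases 0 fun j => X (Sum.inr j)) ∘ (Sum.inl : Fin (p'+1) → _))
      = Fin.lastCases 0 (fun i : Fin p' => (X (Sum.inl i) : MvPolynomial (Fin p' ⊕ Fin q') ℂ)) := by
    funext i; rfl
  rw [h1, aeval_esymm_eq_multiset_esymm, multiset_map_lastCases, multiset_esymm_zero_cons]
  have h2 : rename (Sum.inl : Fin p' → Fin p' ⊕ Fin q') (esymm (Fin p') ℂ r)
      = aeval (fun i : Fin p' => (X (Sum.inl i) : MvPolynomial (Fin p' ⊕ Fin q') ℂ))
        (esymm (Fin p') ℂ r) := by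
    exact (aeval_X_left_apply _).symm.trans (aeval_rename _ _ _)
  rw [h2, aeval_esymm_eq_multiset_esymm]

lemma phi_ey (p' q' s : ℕ) : phi p' q' (ey (p' + 1) (q' + 1) s) = ey p' q' s := by
  rw [ey, phi, aeval_rename, ey]
  have h1 : (Sum.elim (Fin.lastCases 0 fun i => X (Sum.inl i))
      (Fin.lastCases 0 fun j => X (Sum.inr j)) ∘ (Sum.inr : Fin (q'+1) → _))
      = Fin.lastCases 0 (fun j : Fin q' => (X (Sum.inr j) : MvPolynomial (Fin p' ⊕ Fin q') ℂ)) := by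
    funext j; rfl
  rw [h1, aeval_esymm_eq_multiset_esymm, multiset_map_lastCases, multiset_esymm_zero_cons]
  have h2 : rename (Sum.inr : Fin q' → Fin p' ⊕ Fin q') (esymm (Fin q') ℂ s)
      = aeval (fun j : Fin q' => (X (Sum.inr j) : MvPolynomial (Fin p' ⊕ Fin q') ℂ))
        (esymm (Fin q') ℂ s) := by
    exact (aeval_X_left_apply _).symm.trans (aeval_rename _ _ _)
  rw [h2, aeval_esymm_eq_multiset_esymm]

lemma phi_ck (p' q' k : ℕ) : phi p' q' (ck (p' + 1) (q' + 1) k) = ck p' q' k := by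
  rw [ck, map_sum, ck]
  exact Finset.sum_congr rfl fun r _ => by rw [map_mul, phi_ex, phi_ey]

lemma phi_mem_Jpq {p' q' : ℕ} {g : MvPolynomial (Fin (p' + 1) ⊕ Fin (q' + 1)) ℂ}
    (hg : g ∈ Jpq (p' + 1) (q' + 1)) : phi p' q' g ∈ Jpq p' q' := by
  have : Jpq (p' + 1) (q' + 1) ≤ Ideal.comap (phi p' q') (Jpq p' q') := by
    rw [Jpq, Ideal.span_le]
    rintro _ ⟨k, hk1, hk2, rfl⟩
    simp only [SetLike.mem_coe, Ideal.mem_comap, phi_ck]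
    rcases le_or_gt k (p' + q') with h | h
    · exact Ideal.subset_span ⟨k, hk1, h, rfl⟩
    · rw [ck_eq_zero h]; exact (Jpq p' q').zero_mem
  exact this hg

lemma Jpq_eq (p q : ℕ) :
    Jpq p q = Ideal.span (Set.range fun i : Fin (p + q) => ck p q (i + 1)) := by
  rw [Jpq]
  congr 1
  ext f
  constructor
  · rintro ⟨k, h1, h2, rfl⟩
    exact ⟨⟨k - 1, by omega⟩, by simp only []; congr 1; omega⟩
  · rintro ⟨i, rfl⟩
    exact ⟨i + 1, by omega, by have := i.2; omega, rfl⟩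

/- ### theta: evaluation of abstract polynomials at elementary symmetric polys -/

noncomputable def theta (p q : ℕ) :
    MvPolynomial (Fin p ⊕ Fin q) ℂ →ₐ[ℂ] MvPolynomial (Fin p ⊕ Fin q) ℂ :=
  aeval (Sum.elim (fun i : Fin p => ex p q (i + 1)) (fun j : Fin q => ey p q (j + 1)))

lemma theta_X_inl (p q : ℕ) (i : Fin p) : theta p q (X (Sum.inl i)) = ex p q (i + 1) := by
  rw [theta, aeval_X]; rfl

lemma theta_X_inr (p q : ℕ) (j : Fin q) : theta p q (X (Sum.inr j)) = ey p q (j + 1) := by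
  rw [theta, aeval_X]; rfl

lemma biSymm_theta (p q : ℕ) (P : MvPolynomial (Fin p ⊕ Fin q) ℂ) :
    BiSymmetric p q (theta p q P) := by
  intro sx sy
  induction P using MvPolynomial.induction_on with
  | C a =>
    rw [show (C a : MvPolynomial (Fin p ⊕ Fin q) ℂ) = algebraMap ℂ _ a from rfl,
      AlgHom.commutes]
    simp
  | add f g hf hg => rw [map_add, map_add, hf, hg]
  | mul_X f v hfv =>
    rw [map_mul, map_mul, hfv]
    congr 1
    cases v with
    | inl i => rw [theta_X_inl]; exact biSymm_ex p q _ sx sy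
    | inr j => rw [theta_X_inr]; exact biSymm_ey p q _ sx sy

/- injectivity and surjectivity of aeval at esymm -/

lemma aeval_esymm_injective (R : Type*) [CommRing R] (n : ℕ) :
    Function.Injective
      (aeval (fun i : Fin n => esymm (Fin n) R (i + 1)) :
        MvPolynomial (Fin n) R → MvPolynomial (Fin n) R) := by
  intro a b h
  apply (esymmAlgHom_fin_bijective R n).1
  apply Subtype.ext
  rw [esymmAlgHom_apply, esymmAlgHom_apply]
  exact h

lemma aeval_esymm_surjective (R : Type*) [CommRing R] (n : ℕ)
    (g : MvPolynomial (Fin n) R) (hg : g.IsSymmetric) :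
    ∃ u : MvPolynomial (Fin n) R,
      aeval (fun i : Fin n => esymm (Fin n) R (i + 1)) u = g := by
  obtain ⟨u, hu⟩ := (esymmAlgHom_fin_bijective R n).2 ⟨g, hg⟩
  refine ⟨u, ?_⟩
  have h2 : ((esymmAlgHom (Fin n) R n) u : MvPolynomial (Fin n) R) = g := by rw [hu]
  rwa [esymmAlgHom_apply] at h2

/- the nested factorization of theta -/

section Theta

variable (p q : ℕ)

noncomputable def innerT (q : ℕ) : MvPolynomial (Fin q) ℂ →ₐ[ℂ] MvPolynomial (Fin q) ℂ :=
  aeval (fun j : Fin q => esymm (Fin q) ℂ (j + 1))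

noncomputable def outerT (p q : ℕ) :
    MvPolynomial (Fin p) (MvPolynomial (Fin q) ℂ) →ₐ[ℂ]
      MvPolynomial (Fin p) (MvPolynomial (Fin q) ℂ) :=
  (aeval (fun i : Fin p => esymm (Fin p) (MvPolynomial (Fin q) ℂ) (i + 1)) :
    _ →ₐ[MvPolynomial (Fin q) ℂ] _).restrictScalars ℂ

noncomputable def thetaFac (p q : ℕ) :
    MvPolynomial (Fin p ⊕ Fin q) ℂ →ₐ[ℂ] MvPolynomial (Fin p ⊕ Fin q) ℂ :=
  (((sumAlgEquiv ℂ (Fin p) (Fin q)).symm.toAlgHom.comp (outerT p q)).comp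
    (mapAlgHom (innerT q))).comp (sumAlgEquiv ℂ (Fin p) (Fin q)).toAlgHom

lemma sumAlgEquiv_X_inl (i : Fin p) :
    sumAlgEquiv ℂ (Fin p) (Fin q) (X (Sum.inl i)) = X i := by
  exact MvPolynomial.sumAlgEquiv_X_inl ℂ (Fin p) (Fin q) i

lemma sumAlgEquiv_X_inr (j : Fin q) :
    sumAlgEquiv ℂ (Fin p) (Fin q) (X (Sum.inr j)) = C (X j) := by
  exact MvPolynomial.sumAlgEquiv_X_inr ℂ (Fin p) (Fin q) j

lemma sumAlgEquiv_rename_inl (e : MvPolynomial (Fin p) ℂ) :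
    sumAlgEquiv ℂ (Fin p) (Fin q) (rename Sum.inl e)
      = map (C : ℂ →+* MvPolynomial (Fin q) ℂ) e := by
  have := congrArg (fun F => F e)
    (congrArg DFunLike.coe (sumAlgEquiv_comp_rename_inl ℂ (Fin p) (Fin q)))
  exact this

lemma sumAlgEquiv_rename_inr (e : MvPolynomial (Fin q) ℂ) :
    sumAlgEquiv ℂ (Fin p) (Fin q) (rename Sum.inr e)
      = C e := by
  have := congrArg (fun F => F e)
    (congrArg DFunLike.coe (sumAlgEquiv_comp_rename_inr ℂ (Fin p) (Fin q)))
  simpa using this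

lemma theta_eq_thetaFac : theta p q = thetaFac p q := by
  apply algHom_ext
  rintro (i | j)
  · rw [theta_X_inl, thetaFac]
    simp only [AlgHom.comp_apply, AlgEquiv.toAlgHom_eq_coe, AlgHom.coe_coe, AlgEquiv.coe_toAlgHom]
    rw [_root_.sumAlgEquiv_X_inl]
    rw [show (mapAlgHom (R := ℂ) (σ := Fin p) (innerT q)) (X i) = X i by
      simp [mapAlgHom_apply]]
    rw [show outerT p q (X i) = esymm (Fin p) (MvPolynomial (Fin q) ℂ) (i + 1) by
      simp [outerT]]
    apply (AlgEquiv.eq_symm_apply _).2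
    rw [ex, sumAlgEquiv_rename_inl, map_esymm]
  · rw [theta_X_inr, thetaFac]
    simp only [AlgHom.comp_apply, AlgEquiv.toAlgHom_eq_coe, AlgHom.coe_coe, AlgEquiv.coe_toAlgHom]
    rw [_root_.sumAlgEquiv_X_inr]
    rw [show (mapAlgHom (R := ℂ) (σ := Fin p) (innerT q)) (C (X j))
        = C (esymm (Fin q) ℂ (j + 1)) by simp [mapAlgHom_apply, innerT]]
    rw [show outerT p q (C (esymm (Fin q) ℂ (j + 1))) = C (esymm (Fin q) ℂ (j + 1)) by
      simp [outerT]]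
    apply (AlgEquiv.eq_symm_apply _).2
    rw [ey, sumAlgEquiv_rename_inr]

lemma theta_injective : Function.Injective (theta p q) := by
  rw [theta_eq_thetaFac, thetaFac]
  simp only [AlgHom.coe_comp, AlgEquiv.toAlgHom_eq_coe, AlgHom.coe_coe]
  apply Function.Injective.comp
  apply Function.Injective.comp
  apply Function.Injective.comp
  · exact (sumAlgEquiv ℂ (Fin p) (Fin q)).symm.injective
  · exact aeval_esymm_injective (MvPolynomial (Fin q) ℂ) p
  · exact map_injective (innerT q).toRingHom (aeval_esymm_injective ℂ q)
  · exact (sumAlgEquiv ℂ (Fin p) (Fin q)).injective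

end Theta

/- ### surjectivity of theta onto bisymmetric polynomials -/

section Surj

variable (p q : ℕ)

lemma sumAlgEquiv_rename_sumCongr_left (sx : Equiv.Perm (Fin p))
    (f : MvPolynomial (Fin p ⊕ Fin q) ℂ) :
    sumAlgEquiv ℂ (Fin p) (Fin q) (rename (⇑(Equiv.sumCongr sx (Equiv.refl (Fin q)))) f)
      = rename ⇑sx (sumAlgEquiv ℂ (Fin p) (Fin q) f) := by
  induction f using MvPolynomial.induction_on with
  | C a => simp
  | add f g hf hg => simp only [map_add, hf, hg]
  | mul_X f v hfv =>
    simp only [map_mul, hfv]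
    congr 1
    cases v with
    | inl i =>
      rw [rename_X, _root_.sumAlgEquiv_X_inl]
      simp [_root_.sumAlgEquiv_X_inl]
    | inr j =>
      rw [rename_X, _root_.sumAlgEquiv_X_inr]
      simp [_root_.sumAlgEquiv_X_inr]

lemma sumAlgEquiv_rename_sumCongr_right (sy : Equiv.Perm (Fin q))
    (f : MvPolynomial (Fin p ⊕ Fin q) ℂ) :
    sumAlgEquiv ℂ (Fin p) (Fin q) (rename (⇑(Equiv.sumCongr (Equiv.refl (Fin p)) sy)) f)
      = map (rename ⇑sy : MvPolynomial (Fin q) ℂ →ₐ[ℂ] MvPolynomial (Fin q) ℂ).toRingHom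
          (sumAlgEquiv ℂ (Fin p) (Fin q) f) := by
  induction f using MvPolynomial.induction_on with
  | C a => simp
  | add f g hf hg => simp only [map_add, hf, hg]
  | mul_X f v hfv =>
    simp only [map_mul, hfv]
    congr 1
    cases v with
    | inl i =>
      rw [rename_X, _root_.sumAlgEquiv_X_inl]
      simp [_root_.sumAlgEquiv_X_inl]
    | inr j =>
      rw [rename_X, _root_.sumAlgEquiv_X_inr]
      simp [_root_.sumAlgEquiv_X_inr]

/-- `map h` commutes with the outer evaluation at esymm. -/
lemma map_outer_comm (h : MvPolynomial (Fin q) ℂ →+* MvPolynomial (Fin q) ℂ)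
    (u : MvPolynomial (Fin p) (MvPolynomial (Fin q) ℂ)) :
    map h (aeval (fun i : Fin p => esymm (Fin p) (MvPolynomial (Fin q) ℂ) (i + 1)) u)
      = aeval (fun i : Fin p => esymm (Fin p) (MvPolynomial (Fin q) ℂ) (i + 1)) (map h u) := by
  rw [aeval_def, aeval_def]
  rw [show (algebraMap (MvPolynomial (Fin q) ℂ)
      (MvPolynomial (Fin p) (MvPolynomial (Fin q) ℂ))) = C from rfl]
  rw [eval₂_comp_left (map h) C _ u]
  have h1 : (map h).comp (C : MvPolynomial (Fin q) ℂ →+*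
        MvPolynomial (Fin p) (MvPolynomial (Fin q) ℂ))
      = (C : MvPolynomial (Fin q) ℂ →+*
        MvPolynomial (Fin p) (MvPolynomial (Fin q) ℂ)).comp h :=
    RingHom.ext fun r => map_C h r
  have h2 : (⇑(map h) ∘ fun i : Fin p => esymm (Fin p) (MvPolynomial (Fin q) ℂ) (i + 1))
      = fun i : Fin p => esymm (Fin p) (MvPolynomial (Fin q) ℂ) (i + 1) :=
    funext fun i => map_esymm _ _ _ h
  rw [h1, h2, ← eval₂_map]

lemma exists_map_eq {σ R S : Type*} [CommSemiring R] [CommSemiring S] (h : R →+* S)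
    (u : MvPolynomial σ S) (hc : ∀ m, ∃ r : R, h r = coeff m u) :
    ∃ w : MvPolynomial σ R, map h w = u := by
  choose r hr using hc
  refine ⟨∑ m ∈ u.support, monomial m (r m), ?_⟩
  rw [map_sum]
  simp_rw [map_monomial, hr]
  exact support_sum_monomial_coeff u

lemma theta_surjOn (f : MvPolynomial (Fin p ⊕ Fin q) ℂ) (hf : BiSymmetric p q f) :
    ∃ P, theta p q P = f := by
  set e := sumAlgEquiv ℂ (Fin p) (Fin q)
  set g := e f with hg
  -- g is symmetric in the outer variables
  have hgsym : g.IsSymmetric := by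
    intro sx
    rw [hg, ← sumAlgEquiv_rename_sumCongr_left p q sx f, hf sx (Equiv.refl _)]
  obtain ⟨u, hu⟩ := aeval_esymm_surjective (MvPolynomial (Fin q) ℂ) p g hgsym
  -- the coefficients of u are symmetric
  have hmap : ∀ sy : Equiv.Perm (Fin q),
      map (rename ⇑sy : MvPolynomial (Fin q) ℂ →ₐ[ℂ] MvPolynomial (Fin q) ℂ).toRingHom u
        = u := by
    intro sy
    apply aeval_esymm_injective (MvPolynomial (Fin q) ℂ) p
    rw [← map_outer_comm, hu]
    rw [hg, ← sumAlgEquiv_rename_sumCongr_right p q sy f, hf (Equiv.refl _) sy]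
  have hcoeff : ∀ m, (coeff m u).IsSymmetric := by
    intro m sy
    have := congrArg (coeff m) (hmap sy)
    rwa [coeff_map] at this
  -- lift u through the inner evaluation
  have hlift : ∀ m, ∃ r : MvPolynomial (Fin q) ℂ,
      (innerT q).toRingHom r = coeff m u := by
    intro m
    obtain ⟨r, hr⟩ := aeval_esymm_surjective ℂ q (coeff m u) (hcoeff m)
    exact ⟨r, hr⟩
  obtain ⟨w, hw⟩ := exists_map_eq (innerT q).toRingHom u hlift
  refine ⟨e.symm w, ?_⟩
  have := theta_eq_thetaFac p q
  rw [this, thetaFac]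
  simp only [AlgHom.comp_apply, AlgEquiv.toAlgHom_eq_coe, AlgHom.coe_coe, AlgEquiv.coe_toAlgHom]
  rw [AlgEquiv.apply_symm_apply]
  rw [show (mapAlgHom (R := ℂ) (σ := Fin p) (innerT q)) w
      = map (innerT q).toRingHom w from rfl]
  rw [hw]
  rw [show outerT p q u
      = aeval (fun i : Fin p => esymm (Fin p) (MvPolynomial (Fin q) ℂ) (i + 1)) u from rfl]
  rw [hu, hg, AlgEquiv.symm_apply_apply]

end Surj

/- ### abstract generator polynomials -/

noncomputable def exA (p q r : ℕ) : MvPolynomial (Fin p ⊕ Fin q) ℂ :=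
  if h0 : r = 0 then 1 else if h : r ≤ p then X (Sum.inl ⟨r - 1, by omega⟩) else 0

noncomputable def eyA (p q s : ℕ) : MvPolynomial (Fin p ⊕ Fin q) ℂ :=
  if h0 : s = 0 then 1 else if h : s ≤ q then X (Sum.inr ⟨s - 1, by omega⟩) else 0

noncomputable def ckA (p q k : ℕ) : MvPolynomial (Fin p ⊕ Fin q) ℂ :=
  ∑ r ∈ Finset.range (k + 1), exA p q r * eyA p q (k - r)

lemma theta_exA (p q r : ℕ) : theta p q (exA p q r) = ex p q r := by
  rcases Nat.eq_zero_or_pos r with rfl | hr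
  · rw [exA, dif_pos rfl, map_one, ex, esymm_zero, map_one]
  rcases le_or_gt r p with h | h
  · rw [exA, dif_neg (by omega), dif_pos h, theta_X_inl,
      show ((⟨r - 1, by omega⟩ : Fin p) : ℕ) + 1 = r by
        simp only [Fin.val_mk]; omega]
  · rw [exA, dif_neg (by omega), dif_neg (by omega), map_zero, ex_eq_zero h]

lemma theta_eyA (p q s : ℕ) : theta p q (eyA p q s) = ey p q s := by
  rcases Nat.eq_zero_or_pos s with rfl | hs
  · rw [eyA, dif_pos rfl, map_one, ey, esymm_zero, map_one]
  rcases le_or_gt s q with h | h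
  · rw [eyA, dif_neg (by omega), dif_pos h, theta_X_inr,
      show ((⟨s - 1, by omega⟩ : Fin q) : ℕ) + 1 = s by
        simp only [Fin.val_mk]; omega]
  · rw [eyA, dif_neg (by omega), dif_neg (by omega), map_zero, ey_eq_zero h]

lemma theta_ckA (p q k : ℕ) : theta p q (ckA p q k) = ck p q k := by
  rw [ckA, map_sum, ck]
  exact Finset.sum_congr rfl fun r _ => by rw [map_mul, theta_exA, theta_eyA]

/- phi on abstract generators -/

lemma phi_X_inl_last (p' q' : ℕ) :
    phi p' q' (X (Sum.inl (Fin.last p'))) = 0 := by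
  rw [phi, aeval_X, Sum.elim_inl, Fin.lastCases_last]

lemma phi_X_inr_last (p' q' : ℕ) :
    phi p' q' (X (Sum.inr (Fin.last q'))) = 0 := by
  rw [phi, aeval_X, Sum.elim_inr, Fin.lastCases_last]

lemma phi_X_inl_castSucc (p' q' : ℕ) (i : Fin p') :
    phi p' q' (X (Sum.inl (Fin.castSucc i))) = X (Sum.inl i) := by
  rw [phi, aeval_X, Sum.elim_inl, Fin.lastCases_castSucc]

lemma phi_X_inr_castSucc (p' q' : ℕ) (j : Fin q') :
    phi p' q' (X (Sum.inr (Fin.castSucc j))) = X (Sum.inr j) := by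
  rw [phi, aeval_X, Sum.elim_inr, Fin.lastCases_castSucc]

lemma phi_exA (p' q' r : ℕ) : phi p' q' (exA (p' + 1) (q' + 1) r) = exA p' q' r := by
  rcases Nat.eq_zero_or_pos r with rfl | hr
  · rw [exA, dif_pos rfl, map_one, exA, dif_pos rfl]
  rcases le_or_gt r (p' + 1) with h | h
  · rw [exA, dif_neg (by omega), dif_pos h]
    rcases eq_or_lt_of_le h with rfl | h2
    · have : (⟨p' + 1 - 1, by omega⟩ : Fin (p' + 1)) = Fin.last p' := by
        apply Fin.ext; simp
      rw [this, phi_X_inl_last, exA, dif_neg (by omega), dif_neg (by omega)]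
    · have h3 : r ≤ p' := by omega
      have : (⟨r - 1, by omega⟩ : Fin (p' + 1))
          = Fin.castSucc ⟨r - 1, by omega⟩ := by apply Fin.ext; simp
      rw [this, phi_X_inl_castSucc, exA, dif_neg (by omega), dif_pos h3]
  · have h0 : r ≠ 0 := by omega
    have h1 : ¬ r ≤ p' + 1 := by omega
    have h2 : ¬ r ≤ p' := by omega
    rw [exA, dif_neg h0, dif_neg h1, map_zero, exA, dif_neg h0, dif_neg h2]

lemma phi_eyA (p' q' s : ℕ) : phi p' q' (eyA (p' + 1) (q' + 1) s) = eyA p' q' s := by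
  rcases Nat.eq_zero_or_pos s with rfl | hs
  · rw [eyA, dif_pos rfl, map_one, eyA, dif_pos rfl]
  rcases le_or_gt s (q' + 1) with h | h
  · rw [eyA, dif_neg (by omega), dif_pos h]
    rcases eq_or_lt_of_le h with rfl | h2
    · have : (⟨q' + 1 - 1, by omega⟩ : Fin (q' + 1)) = Fin.last q' := by
        apply Fin.ext; simp
      rw [this, phi_X_inr_last, eyA, dif_neg (by omega), dif_neg (by omega)]
    · have h3 : s ≤ q' := by omega
      have : (⟨s - 1, by omega⟩ : Fin (q' + 1))
          = Fin.castSucc ⟨s - 1, by omega⟩ := by apply Fin.ext; simp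
      rw [this, phi_X_inr_castSucc, eyA, dif_neg (by omega), dif_pos h3]
  · have h0 : s ≠ 0 := by omega
    have h1 : ¬ s ≤ q' + 1 := by omega
    have h2 : ¬ s ≤ q' := by omega
    rw [eyA, dif_neg h0, dif_neg h1, map_zero, eyA, dif_neg h0, dif_neg h2]

lemma phi_ckA (p' q' k : ℕ) : phi p' q' (ckA (p' + 1) (q' + 1) k) = ckA p' q' k := by
  rw [ckA, map_sum, ckA]
  exact Finset.sum_congr rfl fun r _ => by rw [map_mul, phi_exA, phi_eyA]

/- ### phi theta commutation -/

lemma phi_theta (p' q' : ℕ) (P : MvPolynomial (Fin (p' + 1) ⊕ Fin (q' + 1)) ℂ) :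
    phi p' q' (theta (p' + 1) (q' + 1) P) = theta p' q' (phi p' q' P) := by
  have : (phi p' q').comp (theta (p' + 1) (q' + 1))
      = (theta p' q').comp (phi p' q') := by
    apply algHom_ext
    rintro (i | j)
    · rw [AlgHom.comp_apply, AlgHom.comp_apply, theta_X_inl, phi_ex]
      rcases Fin.eq_castSucc_or_eq_last i with ⟨i', rfl⟩ | rfl
      · rw [phi_X_inl_castSucc, theta_X_inl, Fin.coe_castSucc]
      · rw [phi_X_inl_last, map_zero, Fin.val_last, ex_eq_zero (by omega)]
    · rw [AlgHom.comp_apply, AlgHom.comp_apply, theta_X_inr, phi_ey]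
      rcases Fin.eq_castSucc_or_eq_last j with ⟨j', rfl⟩ | rfl
      · rw [phi_X_inr_castSucc, theta_X_inr, Fin.coe_castSucc]
      · rw [phi_X_inr_last, map_zero, Fin.val_last, ey_eq_zero (by omega)]
  exact DFunLike.congr_fun this P

/- ### the lift iota -/

noncomputable def iota (p' q' : ℕ) :
    MvPolynomial (Fin p' ⊕ Fin q') ℂ →ₐ[ℂ]
      MvPolynomial (Fin (p' + 1) ⊕ Fin (q' + 1)) ℂ :=
  rename (Sum.map Fin.castSucc Fin.castSucc)

lemma phi_iota (p' q' : ℕ) (f : MvPolynomial (Fin p' ⊕ Fin q') ℂ) :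
    phi p' q' (iota p' q' f) = f := by
  rw [iota, phi, aeval_rename]
  have : (Sum.elim (Fin.lastCases 0 fun i => (X (Sum.inl i) : MvPolynomial (Fin p' ⊕ Fin q') ℂ))
        (Fin.lastCases 0 fun j => X (Sum.inr j))
      ∘ Sum.map Fin.castSucc Fin.castSucc) = X := by
    funext v
    cases v with
    | inl i =>
      show Fin.lastCases (0 : MvPolynomial (Fin p' ⊕ Fin q') ℂ)
        (fun i : Fin p' => (X (Sum.inl i) : MvPolynomial (Fin p' ⊕ Fin q') ℂ))
        (Fin.castSucc i) = X (Sum.inl i)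
      rw [Fin.lastCases_castSucc]
    | inr j =>
      show Fin.lastCases (0 : MvPolynomial (Fin p' ⊕ Fin q') ℂ)
        (fun j : Fin q' => (X (Sum.inr j) : MvPolynomial (Fin p' ⊕ Fin q') ℂ))
        (Fin.castSucc j) = X (Sum.inr j)
      rw [Fin.lastCases_castSucc]
  rw [this, aeval_X_left_apply]

/- ### kernel of phi -/

lemma mem_ker_phi (p' q' : ℕ) (D : MvPolynomial (Fin (p' + 1) ⊕ Fin (q' + 1)) ℂ)
    (hD : phi p' q' D = 0) :
    D ∈ Ideal.span {(X (Sum.inl (Fin.last p')) : MvPolynomial (Fin (p' + 1) ⊕ Fin (q' + 1)) ℂ),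
      X (Sum.inr (Fin.last q'))} := by
  have key : ∀ E : MvPolynomial (Fin (p' + 1) ⊕ Fin (q' + 1)) ℂ,
      E - iota p' q' (phi p' q' E) ∈
        Ideal.span {(X (Sum.inl (Fin.last p')) :
          MvPolynomial (Fin (p' + 1) ⊕ Fin (q' + 1)) ℂ), X (Sum.inr (Fin.last q'))} := by
    intro E
    induction E using MvPolynomial.induction_on with
    | C a =>
      rw [show (phi p' q') (C a) = C a from by
        rw [show (C a : MvPolynomial (Fin (p' + 1) ⊕ Fin (q' + 1)) ℂ)
            = algebraMap ℂ _ a from rfl, AlgHom.commutes]; rfl]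
      rw [show (iota p' q') (C a) = C a from by
        rw [show (C a : MvPolynomial (Fin p' ⊕ Fin q') ℂ)
            = algebraMap ℂ _ a from rfl, AlgHom.commutes]; rfl]
      rw [sub_self]
      exact Ideal.zero_mem _
    | add f g hf hg =>
      rw [map_add, map_add]
      have : f + g - (iota p' q' (phi p' q' f) + iota p' q' (phi p' q' g))
          = (f - iota p' q' (phi p' q' f)) + (g - iota p' q' (phi p' q' g)) := by ring
      rw [this]
      exact Ideal.add_mem _ hf hg
    | mul_X E v hE =>
      have hXv : X v - iota p' q' (phi p' q' (X v)) ∈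
          Ideal.span {(X (Sum.inl (Fin.last p')) :
            MvPolynomial (Fin (p' + 1) ⊕ Fin (q' + 1)) ℂ), X (Sum.inr (Fin.last q'))} := by
        cases v with
        | inl i =>
          rcases Fin.eq_castSucc_or_eq_last i with ⟨i', rfl⟩ | rfl
          · rw [phi_X_inl_castSucc, iota, rename_X]
            show X (Sum.inl (Fin.castSucc i')) - X (Sum.inl (Fin.castSucc i')) ∈ _
            rw [sub_self]; exact Ideal.zero_mem _
          · rw [phi_X_inl_last, map_zero, sub_zero]
            exact Ideal.subset_span (Set.mem_insert _ _)
        | inr j =>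
          rcases Fin.eq_castSucc_or_eq_last j with ⟨j', rfl⟩ | rfl
          · rw [phi_X_inr_castSucc, iota, rename_X]
            show X (Sum.inr (Fin.castSucc j')) - X (Sum.inr (Fin.castSucc j')) ∈ _
            rw [sub_self]; exact Ideal.zero_mem _
          · rw [phi_X_inr_last, map_zero, sub_zero]
            exact Ideal.subset_span (Set.mem_insert_of_mem _ rfl)
      have : E * X v - iota p' q' (phi p' q' (E * X v))
          = (E - iota p' q' (phi p' q' E)) * X v
            + iota p' q' (phi p' q' E) * (X v - iota p' q' (phi p' q' (X v))) := by
        rw [map_mul, map_mul]; ring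
      rw [this]
      exact Ideal.add_mem _ (Ideal.mul_mem_right _ _ hE) (Ideal.mul_mem_left _ _ hXv)
  have := key D
  rwa [hD, map_zero, sub_zero] at this

/- ### Reynolds operator -/

noncomputable def reyL (p q : ℕ) :
    MvPolynomial (Fin p ⊕ Fin q) ℂ →ₗ[ℂ] MvPolynomial (Fin p ⊕ Fin q) ℂ :=
  ((Fintype.card (Equiv.Perm (Fin p) × Equiv.Perm (Fin q)) : ℂ))⁻¹ •
    ∑ s : Equiv.Perm (Fin p) × Equiv.Perm (Fin q),
      (rename (⇑(Equiv.sumCongr s.1 s.2)) :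
        MvPolynomial (Fin p ⊕ Fin q) ℂ →ₐ[ℂ] MvPolynomial (Fin p ⊕ Fin q) ℂ).toLinearMap

lemma reyL_apply (p q : ℕ) (g : MvPolynomial (Fin p ⊕ Fin q) ℂ) :
    reyL p q g = ((Fintype.card (Equiv.Perm (Fin p) × Equiv.Perm (Fin q)) : ℂ))⁻¹ •
      ∑ s : Equiv.Perm (Fin p) × Equiv.Perm (Fin q),
        rename (⇑(Equiv.sumCongr s.1 s.2)) g := by
  rw [reyL, LinearMap.smul_apply, LinearMap.sum_apply]
  rfl

lemma rename_sumCongr_sumCongr (p q : ℕ) (a c : Equiv.Perm (Fin p))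
    (b d : Equiv.Perm (Fin q)) (g : MvPolynomial (Fin p ⊕ Fin q) ℂ) :
    rename (⇑(Equiv.sumCongr a b)) (rename (⇑(Equiv.sumCongr c d)) g)
      = rename (⇑(Equiv.sumCongr (a * c) (b * d))) g := by
  rw [rename_rename]
  have hfun : ⇑(Equiv.sumCongr a b) ∘ ⇑(Equiv.sumCongr c d)
      = ⇑(Equiv.sumCongr (a * c) (b * d)) := by
    funext v
    cases v with
    | inl i => simp
    | inr j => simp
  rw [hfun]

lemma biSymm_reyL (p q : ℕ) (g : MvPolynomial (Fin p ⊕ Fin q) ℂ) :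
    BiSymmetric p q (reyL p q g) := by
  intro sx sy
  rw [reyL_apply]
  have hsmul : ∀ (c : ℂ) (x : MvPolynomial (Fin p ⊕ Fin q) ℂ),
      rename (⇑(Equiv.sumCongr sx sy)) (c • x)
        = c • rename (⇑(Equiv.sumCongr sx sy)) x := fun c x =>
    (rename (⇑(Equiv.sumCongr sx sy)) :
      MvPolynomial (Fin p ⊕ Fin q) ℂ →ₐ[ℂ] _).toLinearMap.map_smul c x
  rw [hsmul, map_sum]
  congr 1
  have hterm : ∀ s : Equiv.Perm (Fin p) × Equiv.Perm (Fin q),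
      rename (⇑(Equiv.sumCongr sx sy)) (rename (⇑(Equiv.sumCongr s.1 s.2)) g)
        = rename (⇑(Equiv.sumCongr ((sx, sy) * s).1 ((sx, sy) * s).2)) g := fun s =>
    rename_sumCongr_sumCongr p q sx s.1 sy s.2 g
  rw [Finset.sum_congr rfl fun s _ => hterm s]
  exact Fintype.sum_equiv (Equiv.mulLeft ((sx, sy) :
    Equiv.Perm (Fin p) × Equiv.Perm (Fin q))) _ _ (fun s => rfl)

lemma reyL_of_biSymm (p q : ℕ) (g : MvPolynomial (Fin p ⊕ Fin q) ℂ)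
    (hg : BiSymmetric p q g) : reyL p q g = g := by
  rw [reyL_apply]
  rw [Finset.sum_congr rfl fun s _ => hg s.1 s.2, Finset.sum_const, Finset.card_univ]
  rw [← Nat.cast_smul_eq_nsmul ℂ, smul_smul,
    inv_mul_cancel₀ (by exact_mod_cast Nat.cast_ne_zero.2 Fintype.card_ne_zero), one_smul]

lemma reyL_mul_ck (p q k : ℕ) (r : MvPolynomial (Fin p ⊕ Fin q) ℂ) :
    reyL p q (r * ck p q k) = reyL p q r * ck p q k := by
  rw [reyL_apply, reyL_apply]
  have h1 : ∑ s : Equiv.Perm (Fin p) × Equiv.Perm (Fin q),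
        rename (⇑(Equiv.sumCongr s.1 s.2)) (r * ck p q k)
      = ∑ s : Equiv.Perm (Fin p) × Equiv.Perm (Fin q),
        rename (⇑(Equiv.sumCongr s.1 s.2)) r * ck p q k :=
    Finset.sum_congr rfl fun s _ => by rw [map_mul, biSymm_ck p q k s.1 s.2]
  rw [h1, ← Finset.sum_mul, smul_mul_assoc]

/- ### the main theorem -/

/-- (proof of Lemma `unitborel`) For `1 ≤ p ≤ q` with `p + q ≥ 3` (here
`p = p' + 1`, `q = q' + 1`) and any bisymmetric `f`, `φ(f) ∈ J_{p-1,q-1}` iff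
`f` is congruent mod `J_{p,q}` to `e_p(x)·h₁ + e_q(y)·h₂` with `h₁, h₂`
bisymmetric: the kernel of the induced map of quotient rings is the ideal
generated by `σ_p` and `τ_q`. -/
theorem stmt_9 (p' q' : ℕ) (hpq : p' ≤ q') (h3 : 1 ≤ p' + q')
    (f : MvPolynomial (Fin (p' + 1) ⊕ Fin (q' + 1)) ℂ)
    (hf : BiSymmetric (p' + 1) (q' + 1) f) :
    phi p' q' f ∈ Jpq p' q' ↔
      ∃ h₁ h₂ : MvPolynomial (Fin (p' + 1) ⊕ Fin (q' + 1)) ℂ,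
        BiSymmetric (p' + 1) (q' + 1) h₁ ∧ BiSymmetric (p' + 1) (q' + 1) h₂ ∧
        f - ex (p' + 1) (q' + 1) (p' + 1) * h₁ -
          ey (p' + 1) (q' + 1) (q' + 1) * h₂ ∈ Jpq (p' + 1) (q' + 1) := by
  constructor
  · intro hmem
    obtain ⟨P, hP⟩ := theta_surjOn (p' + 1) (q' + 1) f hf
    rw [Jpq_eq] at hmem
    obtain ⟨c, hc⟩ := Ideal.mem_span_range_iff_exists_fun.1 hmem
    have hphif : BiSymmetric p' q' (phi p' q' f) := by
      rw [← hP, phi_theta]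
      exact biSymm_theta _ _ _
    have hrey : phi p' q' f
        = ∑ i : Fin (p' + q'), reyL p' q' (c i) * ck p' q' (i + 1) := by
      calc phi p' q' f = reyL p' q' (phi p' q' f) :=
            (reyL_of_biSymm _ _ _ hphif).symm
        _ = reyL p' q' (∑ i : Fin (p' + q'), c i * ck p' q' (i + 1)) := by rw [hc]
        _ = ∑ i : Fin (p' + q'), reyL p' q' (c i * ck p' q' (i + 1)) := map_sum _ _ _
        _ = ∑ i : Fin (p' + q'), reyL p' q' (c i) * ck p' q' (i + 1) :=
            Finset.sum_congr rfl fun i _ => reyL_mul_ck p' q' (i + 1) (c i)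
    have hU : ∀ i : Fin (p' + q'), ∃ U, theta p' q' U = reyL p' q' (c i) :=
      fun i => theta_surjOn p' q' _ (biSymm_reyL p' q' (c i))
    choose U hUeq using hU
    have habs : phi p' q' P = ∑ i : Fin (p' + q'), U i * ckA p' q' (i + 1) := by
      apply theta_injective p' q'
      rw [← phi_theta, hP, map_sum, hrey]
      exact Finset.sum_congr rfl fun i _ => by rw [map_mul, hUeq, theta_ckA]
    set D := P - ∑ i : Fin (p' + q'), iota p' q' (U i) * ckA (p' + 1) (q' + 1) (i + 1)
      with hDdef
    have hDker : phi p' q' D = 0 := by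
      rw [hDdef, map_sub, map_sum, habs]
      rw [show ∑ i : Fin (p' + q'),
            phi p' q' (iota p' q' (U i) * ckA (p' + 1) (q' + 1) (i + 1))
          = ∑ i : Fin (p' + q'), U i * ckA p' q' (i + 1) from
        Finset.sum_congr rfl fun i _ => by rw [map_mul, phi_iota, phi_ckA]]
      rw [sub_self]
    obtain ⟨A, B, hAB⟩ := Ideal.mem_span_pair.1 (mem_ker_phi p' q' D hDker)
    refine ⟨theta (p' + 1) (q' + 1) A, theta (p' + 1) (q' + 1) B,
      biSymm_theta _ _ _, biSymm_theta _ _ _, ?_⟩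
    have hP2 : P = (∑ i : Fin (p' + q'),
          iota p' q' (U i) * ckA (p' + 1) (q' + 1) (i + 1))
        + (A * X (Sum.inl (Fin.last p')) + B * X (Sum.inr (Fin.last q'))) := by
      rw [hAB, hDdef]
      ring
    have hth_last_l : theta (p' + 1) (q' + 1) (X (Sum.inl (Fin.last p')))
        = ex (p' + 1) (q' + 1) (p' + 1) := by
      rw [theta_X_inl, Fin.val_last]
    have hth_last_r : theta (p' + 1) (q' + 1) (X (Sum.inr (Fin.last q')))
        = ey (p' + 1) (q' + 1) (q' + 1) := by
      rw [theta_X_inr, Fin.val_last]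
    have hfeq : f = (∑ i : Fin (p' + q'),
          theta (p' + 1) (q' + 1) (iota p' q' (U i)) * ck (p' + 1) (q' + 1) (i + 1))
        + (theta (p' + 1) (q' + 1) A * ex (p' + 1) (q' + 1) (p' + 1)
          + theta (p' + 1) (q' + 1) B * ey (p' + 1) (q' + 1) (q' + 1)) := by
      rw [← hP, hP2, map_add, map_add, map_mul, map_mul, map_sum,
        hth_last_l, hth_last_r]
      congr 1
      exact Finset.sum_congr rfl fun i _ => by rw [map_mul, theta_ckA]
    have hsub : f - ex (p' + 1) (q' + 1) (p' + 1) * theta (p' + 1) (q' + 1) A -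
          ey (p' + 1) (q' + 1) (q' + 1) * theta (p' + 1) (q' + 1) B
        = ∑ i : Fin (p' + q'),
          theta (p' + 1) (q' + 1) (iota p' q' (U i)) * ck (p' + 1) (q' + 1) (i + 1) := by
      rw [hfeq]
      ring
    rw [hsub]
    apply Ideal.sum_mem
    intro i _
    apply Ideal.mul_mem_left
    apply Ideal.subset_span
    exact ⟨(i : ℕ) + 1, by omega, by have := i.2; omega, rfl⟩
  · rintro ⟨h₁, h₂, _, _, hJ⟩
    have hm := phi_mem_Jpq hJ
    rw [map_sub, map_sub, map_mul, map_mul, phi_ex, phi_ey,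
      ex_eq_zero (by omega), ey_eq_zero (by omega), zero_mul, zero_mul,
      sub_zero, sub_zero] at hm
    exact hm
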